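/- Let a be a nonnegative integer, b a nonnegative integer, and (λ_0,…,λ_n) = (nb+a, (n-1)b+a, …, b+a, a). Then (1+δ_{λ_n,0}) · oe_{(λ_0,…,λ_n)}(x_1,…,x_n,1) = 2 ∏_{i=1}^n (∑_{j=-b/2}^{b/2} x_i^j) · so^odd_{(λ_0-b/2,…,λ_{n-1}-b/2)}(x_1,…,x_n), where if b is odd the inner sum ranges over all half-integers j with -b/2 ≤ j ≤ b/2. -/
import Mathlib


noncomputable section

/-- The field ℚ(y_1,…,y_n) of rational functions in the square-root variables
y_i = x_i^{1/2}, so that x_i = y_i². -/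
abbrev K (n : ℕ) : Type := FractionRing (MvPolynomial (Fin n) ℚ)

/-- The square-root variable y_i = x_i^{1/2}. -/
def Y {n : ℕ} (i : Fin n) : K n :=
  algebraMap (MvPolynomial (Fin n) ℚ) (K n) (MvPolynomial.X i)

/-- ∏_{i<j} (z_i + z_i⁻¹ - z_j - z_j⁻¹). -/
def xpairs {F : Type*} [Field F] {m : ℕ} (z : Fin m → F) : F :=
  ∏ i : Fin m, ∏ j : Fin m, if i < j then z i + (z i)⁻¹ - z j - (z j)⁻¹ else 1

/-- Odd orthogonal character so^odd, indexed by the doubled partition m = 2λ,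
in the square-root variables y (x_i = y_i²). -/
def soOddD {F : Type*} [Field F] (n : ℕ) (m : Fin n → ℤ) (y : Fin n → F) : F :=
  (Matrix.of fun i j : Fin n =>
      y i ^ (m j + 2 * n - 2 * (j : ℕ) - 1) - y i ^ (-(m j + 2 * n - 2 * (j : ℕ) - 1))).det /
    ((∏ i : Fin n, (y i - (y i)⁻¹)) * xpairs fun i => (y i) ^ 2)

/-- Even orthogonal character oe, indexed by the doubled partition m = 2μ,
in the square-root variables y (x_i = y_i²), including the factor 1+δ_{μ_n,0}. -/
def oeD {F : Type*} [Field F] (n : ℕ) (m : Fin n → ℤ) (y : Fin n → F) : F :=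
  (Matrix.of fun i j : Fin n =>
      y i ^ (m j + 2 * n - 2 * (j : ℕ) - 2) + y i ^ (-(m j + 2 * n - 2 * (j : ℕ) - 2))).det /
    ((if h : 0 < n then (if m ⟨n - 1, by omega⟩ = 0 then 2 else 1) else 1)
      * xpairs fun i => (y i) ^ 2)

/-! ### Auxiliary lemmas -/

lemma Y_ne_zero {n : ℕ} (i : Fin n) : Y i ≠ 0 := by
  have hinj : Function.Injective (algebraMap (MvPolynomial (Fin n) ℚ) (K n)) :=
    IsFractionRing.injective _ _
  intro h
  exact MvPolynomial.X_ne_zero i (hinj (by rw [map_zero]; exact h))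

lemma Y_sq_ne_one {n : ℕ} (i : Fin n) : Y i ^ 2 ≠ 1 := by
  have hinj : Function.Injective (algebraMap (MvPolynomial (Fin n) ℚ) (K n)) :=
    IsFractionRing.injective _ _
  intro h
  have h2 : (MvPolynomial.X i ^ 2 : MvPolynomial (Fin n) ℚ) = 1 := by
    apply hinj
    rw [map_pow, map_one]
    exact h
  have := congrArg MvPolynomial.constantCoeff h2
  simp at this

lemma Y_sub_inv_ne_zero {n : ℕ} (i : Fin n) : Y i - (Y i)⁻¹ ≠ 0 := by
  have h0 := Y_ne_zero i
  have h1 := Y_sq_ne_one i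
  intro h
  apply h1
  have e : Y i ^ 2 - 1 = Y i * (Y i - (Y i)⁻¹) := by field_simp
  rw [h, mul_zero, sub_eq_zero] at e
  exact e

lemma key_id {F : Type*} [Field F] {u : F} (hu : u ≠ 0) (c d : ℤ) :
    (u ^ (d - c) + u ^ (-(d - c))) - (u ^ (d + c) + u ^ (-(d + c)))
      = -((u ^ c - u ^ (-c)) * (u ^ d - u ^ (-d))) := by
  simp only [sub_mul, mul_sub, ← zpow_add₀ hu, ← zpow_sub₀ hu]
  ring_nf

lemma sum_reindex {F : Type*} [Field F] {u : F} (hu : u ≠ 0) (b : ℕ) :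
    (∑ t ∈ (Finset.Icc (-(b : ℤ)) (b : ℤ)).filter (fun t => t % 2 = (b : ℤ) % 2), u ^ t)
      = u ^ (-(b:ℤ)) * ∑ k ∈ Finset.range (b + 1), (u ^ 2) ^ k := by
  rw [Finset.mul_sum]
  refine Finset.sum_nbij' (i := fun t => ((t + b) / 2).toNat) (j := fun k => 2 * (k : ℤ) - b)
    ?_ ?_ ?_ ?_ ?_
  · intro t ht
    simp only [Finset.mem_filter, Finset.mem_Icc] at ht
    simp only [Finset.mem_range]
    omega
  · intro k hk
    simp only [Finset.mem_range] at hk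
    simp only [Finset.mem_filter, Finset.mem_Icc]
    omega
  · intro t ht
    simp only [Finset.mem_filter, Finset.mem_Icc] at ht
    omega
  · intro k hk
    simp only [Finset.mem_range] at hk
    omega
  · intro t ht
    simp only [Finset.mem_filter, Finset.mem_Icc] at ht
    have h : u ^ t = u ^ (-(b:ℤ)) * u ^ (t + b) := by
      rw [← zpow_add₀ hu]; ring_nf
    rw [h]
    congr 1
    have h2 : (2 : ℤ) * ((t + b)/2).toNat = t + b := by omega
    rw [← zpow_natCast (u ^ 2), ← zpow_ofNat u 2, ← zpow_mul, h2]

lemma telescope {F : Type*} [Field F] {u : F} (hu : u ≠ 0) (b : ℕ) :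
    u ^ ((b:ℤ) + 1) - u ^ (-((b:ℤ) + 1))
      = (u - u⁻¹) *
        (∑ t ∈ (Finset.Icc (-(b : ℤ)) (b : ℤ)).filter (fun t => t % 2 = (b : ℤ) % 2), u ^ t) := by
  rw [sum_reindex hu b]
  have hg := geom_sum_mul (u ^ 2) (b + 1)
  have huu : u - u⁻¹ = u⁻¹ * (u ^ 2 - 1) := by field_simp
  rw [huu]
  symm
  calc u⁻¹ * (u ^ 2 - 1) * (u ^ (-(b:ℤ)) * ∑ k ∈ Finset.range (b + 1), (u ^ 2) ^ k)
      = u⁻¹ * u ^ (-(b:ℤ)) * ((∑ k ∈ Finset.range (b + 1), (u ^ 2) ^ k) * (u ^ 2 - 1)) := by ring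
    _ = u⁻¹ * u ^ (-(b:ℤ)) * ((u ^ 2) ^ (b + 1) - 1) := by rw [hg]
    _ = u ^ ((b:ℤ) + 1) - u ^ (-((b:ℤ) + 1)) := by
        rw [← zpow_neg_one, ← zpow_add₀ hu, ← zpow_ofNat u 2, ← zpow_natCast (u^(2:ℤ)),
          ← zpow_mul]
        rw [mul_sub, mul_one, ← zpow_add₀ hu]
        push_cast
        ring_nf

lemma xpairs_snoc {F : Type*} [Field F] {n : ℕ} (w : Fin (n+1) → F) :
    xpairs w = xpairs (w ∘ Fin.castSucc)
      * ∏ i : Fin n, (w (Fin.castSucc i) + (w (Fin.castSucc i))⁻¹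
          - w (Fin.last n) - (w (Fin.last n))⁻¹) := by
  unfold xpairs
  rw [Fin.prod_univ_castSucc]
  have hlast : (∏ j : Fin (n+1),
      if Fin.last n < j then w (Fin.last n) + (w (Fin.last n))⁻¹ - w j - (w j)⁻¹ else 1) = 1 := by
    apply Finset.prod_eq_one
    intro j _
    rw [if_neg (by exact not_lt.mpr (Fin.le_last j))]
  rw [hlast, mul_one, ← Finset.prod_mul_distrib]
  apply Finset.prod_congr rfl
  intro i _
  rw [Fin.prod_univ_castSucc]
  rw [if_pos (Fin.castSucc_lt_last i)]
  congr 1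

lemma det_main {F : Type*} [Field F] {n : ℕ} (y : Fin n → F) (hy : ∀ i, y i ≠ 0)
    (c : ℤ) (e : Fin (n+1) → ℤ) (g : Fin n → ℤ)
    (h1 : ∀ j : Fin n, e j.castSucc = g j + c) (h2 : ∀ j : Fin n, e j.succ = g j - c) :
    (Matrix.of fun i j : Fin (n+1) =>
        (if h : (i:ℕ) < n then y ⟨i,h⟩ else 1) ^ (e j)
          + (if h : (i:ℕ) < n then y ⟨i,h⟩ else 1) ^ (-(e j))).det
      = 2 * (∏ i, (y i ^ c - y i ^ (-c)))
          * (Matrix.of fun i j : Fin n => y i ^ (g j) - y i ^ (-(g j))).det := by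
  set u : Fin (n+1) → F := fun i => if h : (i:ℕ) < n then y ⟨i,h⟩ else 1 with hu
  have hulast : u (Fin.last n) = 1 := by simp [hu]
  have hucast : ∀ i : Fin n, u i.castSucc = y i := by
    intro i; simp [hu, Fin.castSucc]
  set A : Matrix (Fin (n+1)) (Fin (n+1)) F :=
    Matrix.of fun i j => u i ^ (e j) + u i ^ (-(e j)) with hA
  set B : Matrix (Fin (n+1)) (Fin (n+1)) F :=
    Matrix.of fun i j =>
      Fin.cases (motive := fun _ => F) (A i 0) (fun j' => A i j'.succ - A i j'.castSucc) j with hB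
  have hB0 : ∀ i, B i 0 = A i 0 := fun i => rfl
  have hBsucc : ∀ i (j : Fin n), B i j.succ = A i j.succ - A i j.castSucc := by
    intro i j
    simp [hB]
  have hAB : A.det = B.det := by
    apply Matrix.det_eq_of_forall_col_eq_smul_add_pred (fun _ => (1:F))
    · intro i; rw [hB0]
    · intro i j; rw [hBsucc]; ring
  have hBlast0 : B (Fin.last n) 0 = 2 := by
    rw [hB0]
    show u (Fin.last n) ^ (e 0) + u (Fin.last n) ^ (-(e 0)) = 2
    rw [hulast, one_zpow, one_zpow]
    norm_num
  have hBlastsucc : ∀ j : Fin n, B (Fin.last n) j.succ = 0 := by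
    intro j
    rw [hBsucc]
    show (u _ ^ (e j.succ) + u _ ^ (-(e j.succ)))
      - (u _ ^ (e j.castSucc) + u _ ^ (-(e j.castSucc))) = 0
    rw [hulast]
    simp
  have hdetB : B.det = (-1:F) ^ (n : ℕ) * 2 *
      (B.submatrix Fin.castSucc Fin.succ).det := by
    rw [Matrix.det_succ_row B (Fin.last n)]
    rw [Finset.sum_eq_single (0 : Fin (n+1))]
    · rw [hBlast0, Fin.succAbove_last, Fin.succAbove_zero]
      norm_num
    · intro j _ hj
      obtain ⟨j', rfl⟩ := Fin.eq_succ_of_ne_zero hj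
      rw [hBlastsucc]
      ring
    · intro h; exact absurd (Finset.mem_univ _) h
  have hminor : B.submatrix Fin.castSucc Fin.succ
      = Matrix.of (fun i j : Fin n =>
          (-(y i ^ c - y i ^ (-c))) * (y i ^ (g j) - y i ^ (-(g j)))) := by
    ext i j
    rw [Matrix.submatrix_apply, hBsucc]
    show (u i.castSucc ^ (e j.succ) + u i.castSucc ^ (-(e j.succ)))
        - (u i.castSucc ^ (e j.castSucc) + u i.castSucc ^ (-(e j.castSucc)))
      = (-(y i ^ c - y i ^ (-c))) * (y i ^ (g j) - y i ^ (-(g j)))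
    rw [hucast, h1, h2]
    rw [key_id (hy i) c (g j)]
    ring
  have hmul : (Matrix.of (fun i j : Fin n =>
      (-(y i ^ c - y i ^ (-c))) * (y i ^ (g j) - y i ^ (-(g j))))).det
      = (∏ i, (-(y i ^ c - y i ^ (-c)))) *
        (Matrix.of fun i j : Fin n => y i ^ (g j) - y i ^ (-(g j))).det := by
    exact Matrix.det_mul_column (fun i => -(y i ^ c - y i ^ (-c)))
      (Matrix.of fun i j : Fin n => y i ^ (g j) - y i ^ (-(g j)))
  have hprodneg : (∏ i, (-(y i ^ c - y i ^ (-c))))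
      = (-1:F)^(n:ℕ) * ∏ i, (y i ^ c - y i ^ (-c)) := by
    calc (∏ i, (-(y i ^ c - y i ^ (-c))))
        = ∏ i, ((-1:F) * (y i ^ c - y i ^ (-c))) := by simp [neg_one_mul]
      _ = (∏ _i : Fin n, (-1:F)) * ∏ i, (y i ^ c - y i ^ (-c)) := Finset.prod_mul_distrib
      _ = (-1:F)^(n:ℕ) * ∏ i, (y i ^ c - y i ^ (-c)) := by
          simp [Finset.prod_const]
  rw [hAB, hdetB, hminor, hmul, hprodneg]
  have h11 : ((-1:F) ^ (n:ℕ)) * ((-1:F) ^ (n:ℕ)) = 1 := by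
    rw [← pow_add]
    exact Even.neg_one_pow ⟨n, rfl⟩
  linear_combination (2 * (Matrix.of fun i j : Fin n => y i ^ (g j) - y i ^ (-(g j))).det *
    (∏ i, (y i ^ c - y i ^ (-c)))) * h11

lemma sq_factor {F : Type*} [Field F] {v : F} (hv : v ≠ 0) :
    v ^ 2 + (v ^ 2)⁻¹ - 1 - (1:F)⁻¹ = (v - v⁻¹) ^ 2 := by
  field_simp
  ring

/-- Proposition: for λ = (nb+a,…,b+a,a) with a, b nonnegative integers,
(1+δ_{λ_n,0}) oe_λ(x_1,…,x_n,1)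
 = 2 ∏_i (∑_{j=-b/2}^{b/2} x_i^j) · so^odd_{(λ_0-b/2,…,λ_{n-1}-b/2)}(x_1,…,x_n),
where the inner sum over j in unit steps (half-integers when b is odd) is written as a sum of
y_i^t over t = -b, -b+2, …, b (since x_i^j = y_i^{2j}). -/
theorem oe_staircase_eq_soOdd {n : ℕ} (a b : ℕ) :
    ((1 : K n) + if a = 0 then 1 else 0)
      * oeD (n + 1) (fun j => 2 * (((n : ℤ) - (j : ℕ)) * b + a))
          (fun i => if h : (i : ℕ) < n then Y ⟨i, h⟩ else 1)
      = 2 * (∏ i : Fin n,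
            ∑ t ∈ (Finset.Icc (-(b : ℤ)) (b : ℤ)).filter (fun t => t % 2 = (b : ℤ) % 2),
              Y i ^ t)
          * soOddD n (fun j => 2 * (((n : ℤ) - (j : ℕ)) * b + a) - b) Y := by
  have hchar : CharZero (K n) :=
    charZero_of_injective_algebraMap (algebraMap ℚ (K n)).injective
  unfold oeD soOddD
  beta_reduce
  -- set up abbreviations
  set e : Fin (n+1) → ℤ := fun j => (2 * ((b:ℤ)+1)) * ((n:ℤ) - (j:ℕ)) + 2*(a:ℤ) with he
  set g : Fin n → ℤ := fun j => (2 * ((b:ℤ)+1)) * ((n:ℤ) - (j:ℕ)) + 2*(a:ℤ) - ((b:ℤ)+1) with hg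
  -- rewrite exponents
  have hexp1 : ∀ j : Fin (n+1),
      2 * (((n:ℤ) - ((j:ℕ):ℤ)) * (b:ℤ) + (a:ℤ)) + 2 * ((n+1 : ℕ):ℤ) - 2 * ((j:ℕ):ℤ) - 2
        = e j := by
    intro j; rw [he]; push_cast; ring
  have hexp2 : ∀ j : Fin n,
      2 * (((n:ℤ) - ((j:ℕ):ℤ)) * (b:ℤ) + (a:ℤ)) - (b:ℤ) + 2 * ((n : ℕ):ℤ) - 2 * ((j:ℕ):ℤ) - 1
        = g j := by
    intro j; rw [hg]; push_cast; ring
  simp only [hexp1, hexp2]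
  -- the determinant identity
  rw [det_main Y Y_ne_zero ((b:ℤ)+1) e g
    (by intro j; rw [he, hg]; push_cast [Fin.coe_castSucc]; ring)
    (by intro j; rw [he, hg]; push_cast [Fin.val_succ]; ring)]
  -- delta factor
  rw [dif_pos (Nat.succ_pos n)]
  have hδ : (if (2 * (((n:ℤ) - (((⟨n + 1 - 1, by omega⟩ : Fin (n+1))):ℕ)) * (b:ℤ) + (a:ℤ)) = 0)
      then (2: K n) else 1) = (if a = 0 then 2 else 1) := by
    congr 1
    simp
  rw [hδ]
  -- xpairs splitting
  rw [xpairs_snoc (fun i : Fin (n+1) => (if h : ((i:Fin (n+1)):ℕ) < n then Y ⟨i,h⟩ else 1) ^ 2)]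
  have hcomp : ((fun i : Fin (n+1) => (if h : ((i:Fin (n+1)):ℕ) < n then Y ⟨i,h⟩ else 1) ^ 2)
      ∘ Fin.castSucc) = fun i : Fin n => (Y i) ^ 2 := by
    funext i
    simp [Function.comp, Fin.castSucc]
  have hfac : (∏ i : Fin n,
      ((fun i : Fin (n+1) => (if h : ((i:Fin (n+1)):ℕ) < n then Y ⟨i,h⟩ else 1) ^ 2)
          (Fin.castSucc i)
        + ((fun i : Fin (n+1) => (if h : ((i:Fin (n+1)):ℕ) < n then Y ⟨i,h⟩ else 1) ^ 2)
          (Fin.castSucc i))⁻¹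
        - (fun i : Fin (n+1) => (if h : ((i:Fin (n+1)):ℕ) < n then Y ⟨i,h⟩ else 1) ^ 2)
          (Fin.last n)
        - ((fun i : Fin (n+1) => (if h : ((i:Fin (n+1)):ℕ) < n then Y ⟨i,h⟩ else 1) ^ 2)
          (Fin.last n))⁻¹))
      = ∏ i : Fin n, (Y i - (Y i)⁻¹) ^ 2 := by
    apply Finset.prod_congr rfl
    intro i _
    have h1 : ((Fin.castSucc i : Fin (n+1)) : ℕ) < n := by simp
    have h2 : ¬ (((Fin.last n : Fin (n+1))) : ℕ) < n := by simp
    simp only [dif_pos h1, dif_neg h2, one_pow]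
    rw [show (Y (⟨((Fin.castSucc i : Fin (n+1)) : ℕ), h1⟩ : Fin n)) = Y i by congr 1]
    exact sq_factor (Y_ne_zero i)
  rw [hcomp, hfac]
  -- telescoping product
  have htel : (∏ i : Fin n, (Y i ^ ((b:ℤ)+1) - Y i ^ (-((b:ℤ)+1))))
      = (∏ i : Fin n, (Y i - (Y i)⁻¹)) *
        ∏ i : Fin n,
          ∑ t ∈ (Finset.Icc (-(b : ℤ)) (b : ℤ)).filter (fun t => t % 2 = (b : ℤ) % 2),
            Y i ^ t := by
    rw [← Finset.prod_mul_distrib]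
    apply Finset.prod_congr rfl
    intro i _
    exact telescope (Y_ne_zero i) b
  rw [htel]
  -- final field algebra
  set P : K n := ∏ i : Fin n, (Y i - (Y i)⁻¹) with hPdef
  set S : K n := ∏ i : Fin n,
      ∑ t ∈ (Finset.Icc (-(b : ℤ)) (b : ℤ)).filter (fun t => t % 2 = (b : ℤ) % 2), Y i ^ t
    with hSdef
  set xp : K n := xpairs (fun i : Fin n => (Y i) ^ 2) with hxpdef
  set D : K n := (Matrix.of fun i j : Fin n => Y i ^ (g j) - Y i ^ (-(g j))).det with hDdef
  have hP : P ≠ 0 := Finset.prod_ne_zero_iff.mpr (fun i _ => Y_sub_inv_ne_zero i)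
  have hδne : (if a = 0 then (2:K n) else 1) ≠ 0 := by
    split_ifs
    · exact two_ne_zero
    · exact one_ne_zero
  have hpre : ((1 : K n) + if a = 0 then 1 else 0) = (if a = 0 then 2 else 1) := by
    split_ifs <;> norm_num
  rw [hpre]
  have hPP : (∏ i : Fin n, (Y i - (Y i)⁻¹) ^ 2) = P ^ 2 := by
    rw [hPdef, ← Finset.prod_pow]
  rw [hPP]
  rcases eq_or_ne xp 0 with hxp | hxp
  · rw [hxp]
    simp
  · split_ifs with ha
    · field_simp
    · field_simp
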